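/- As γ → 0⁺, the exponents E₁(γ) and E₂(γ) approach the optimal sequential error exponents: lim_{γ→0⁺} E₁(γ) = D(P₂‖P₁) and lim_{γ→0⁺} E₂(γ) = D(P₁‖P₂). -/

import Mathlib

open Real Filter Finset MeasureTheory
open scoped Classical

variable {𝒳 : Type*} [Fintype 𝒳] [DecidableEq 𝒳] [Nonempty 𝒳]

/-- Kullback–Leibler divergence `D(Q‖P)` between pmfs on a finite alphabet. -/
noncomputable def kl (Q P : 𝒳 → ℝ) : ℝ :=
  ∑ x, Q x * Real.log (Q x / P x)

/-- The `λ`-tilted distribution `P^(λ)` of `P₁` and `P₂`. -/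
noncomputable def tilt (P₁ P₂ : 𝒳 → ℝ) (l : ℝ) : 𝒳 → ℝ :=
  fun x => P₁ x ^ (1 - l) * P₂ x ^ l / ∑ a, P₁ a ^ (1 - l) * P₂ a ^ l

/-- Probability of a set of length-`N` sample paths under i.i.d. sampling from `P`. -/
noncomputable def prodProb (P : 𝒳 → ℝ) {N : ℕ} (S : Set (Fin N → 𝒳)) : ℝ :=
  ∑ ω : Fin N → 𝒳, S.indicator (fun ω' => ∏ i, P (ω' i)) ω

/-- The fixed-length error-exponent region `R_FD`. -/
def RFD (P₁ P₂ : 𝒳 → ℝ) : Set (ℝ × ℝ) :=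
  {p | 0 ≤ p.1 ∧ 0 ≤ p.2 ∧
    ∃ l ∈ Set.Icc (0:ℝ) 1,
      p.1 ≤ kl (tilt P₁ P₂ l) P₁ ∧ p.2 ≤ kl (tilt P₁ P₂ l) P₂}

/-- `E₁(γ) = max{D(P^(λ)‖P₁) : λ ∈ [0,1], D(P^(λ)‖P₂) ≥ γ}` (sup of the empty set is 0). -/
noncomputable def E1exp (P₁ P₂ : 𝒳 → ℝ) (γ : ℝ) : ℝ :=
  sSup {E | ∃ l ∈ Set.Icc (0:ℝ) 1, γ ≤ kl (tilt P₁ P₂ l) P₂ ∧ E = kl (tilt P₁ P₂ l) P₁}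

/-- `E₂(γ) = max{D(P^(λ)‖P₂) : λ ∈ [0,1], D(P^(λ)‖P₁) ≥ γ}` (sup of the empty set is 0). -/
noncomputable def E2exp (P₁ P₂ : 𝒳 → ℝ) (γ : ℝ) : ℝ :=
  sSup {E | ∃ l ∈ Set.Icc (0:ℝ) 1, γ ≤ kl (tilt P₁ P₂ l) P₁ ∧ E = kl (tilt P₁ P₂ l) P₂}

/-- A sequential hypothesis test whose stopping time is bounded by `N`:
a stopping time `τ` for the coordinate filtration, together with decision events
`A1`, `A2` that are determined by the samples observed up to time `τ`,
are disjoint, and exhaust the sample space. -/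
structure HypTest (𝒳 : Type*) (N : ℕ) where
  τ : (Fin N → 𝒳) → ℕ
  A1 : Set (Fin N → 𝒳)
  A2 : Set (Fin N → 𝒳)
  tau_le : ∀ ω, τ ω ≤ N
  stopping : ∀ ω ω', (∀ i : Fin N, (i : ℕ) < τ ω → ω i = ω' i) → τ ω' = τ ω
  adapted1 : ∀ ω ω', (∀ i : Fin N, (i : ℕ) < τ ω → ω i = ω' i) → (ω ∈ A1 ↔ ω' ∈ A1)
  adapted2 : ∀ ω ω', (∀ i : Fin N, (i : ℕ) < τ ω → ω i = ω' i) → (ω ∈ A2 ↔ ω' ∈ A2)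
  disj : Disjoint A1 A2
  exhaust : A1 ∪ A2 = Set.univ

/-- `(E₁, E₂)` is achievable by `γ`-almost-fixed-length tests. -/
def AFLAchievable (P₁ P₂ : 𝒳 → ℝ) (γ E₁ E₂ : ℝ) : Prop :=
  0 ≤ E₁ ∧ 0 ≤ E₂ ∧
  ∃ c : ℝ, 0 < c ∧ ∃ l : ℕ, 0 < l ∧
    ∀ δ : ℝ, 0 < δ → ∃ n₀ : ℕ, ∀ n : ℕ, n₀ ≤ n →
      ∃ N : ℕ, (N : ℝ) ≤ c * (n : ℝ) ^ l ∧
        ∃ T : HypTest 𝒳 N,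
          prodProb P₁ {ω | n < T.τ ω} ≤ Real.exp (-(γ * n)) ∧
          prodProb P₂ {ω | n < T.τ ω} ≤ Real.exp (-(γ * n)) ∧
          prodProb P₁ T.A2 ≤ Real.exp (-((E₁ - δ) * n)) ∧
          prodProb P₂ T.A1 ≤ Real.exp (-((E₂ - δ) * n))

/-- `(E₁, E₂, E_Ω)` is achievable by fixed-length tests with a rejection option. -/
def RejAchievable (P₁ P₂ : 𝒳 → ℝ) (E₁ E₂ EΩ : ℝ) : Prop :=
  0 ≤ E₁ ∧ 0 ≤ E₂ ∧ 0 ≤ EΩ ∧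
  ∀ δ : ℝ, 0 < δ → ∃ n₀ : ℕ, ∀ n : ℕ, n₀ ≤ n →
    ∃ A1 A2 AΩ : Set (Fin n → 𝒳),
      Disjoint A1 A2 ∧ Disjoint A1 AΩ ∧ Disjoint A2 AΩ ∧ A1 ∪ A2 ∪ AΩ = Set.univ ∧
      prodProb P₁ A2 ≤ Real.exp (-((E₁ - δ) * n)) ∧
      prodProb P₂ A1 ≤ Real.exp (-((E₂ - δ) * n)) ∧
      prodProb P₁ AΩ + prodProb P₂ AΩ ≤ Real.exp (-((EΩ - δ) * n))

/-- Sum of the log-likelihood ratios of the first `n` samples. -/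
noncomputable def S1 (P₁ P₂ : 𝒳 → ℝ) (n : ℕ) {N : ℕ} (ω : Fin N → 𝒳) : ℝ :=
  ∑ i ∈ Finset.univ.filter (fun i : Fin N => (i : ℕ) < n),
    Real.log (P₁ (ω i) / P₂ (ω i))

/-- Sum of the log-likelihood ratios of the samples after time `n`. -/
noncomputable def S2 (P₁ P₂ : 𝒳 → ℝ) (n : ℕ) {N : ℕ} (ω : Fin N → 𝒳) : ℝ :=
  ∑ i ∈ Finset.univ.filter (fun i : Fin N => n ≤ (i : ℕ)),
    Real.log (P₁ (ω i) / P₂ (ω i))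

/-- Event that the two-phase test (phase-one thresholds `α₁ > β₁`, phase-two threshold `α`)
chooses `H₁`. -/
def twoPhaseA1 (P₁ P₂ : 𝒳 → ℝ) (k n : ℕ) (α₁ β₁ α : ℝ) : Set (Fin ((k + 1) * n) → 𝒳) :=
  {ω | α₁ ≤ S1 P₁ P₂ n ω / n ∨
    (β₁ < S1 P₁ P₂ n ω / n ∧ S1 P₁ P₂ n ω / n < α₁ ∧ α ≤ S2 P₁ P₂ n ω / (k * n))}

/-- Event that the two-phase test chooses `H₂`. -/
def twoPhaseA2 (P₁ P₂ : 𝒳 → ℝ) (k n : ℕ) (α₁ β₁ α : ℝ) : Set (Fin ((k + 1) * n) → 𝒳) :=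
  {ω | S1 P₁ P₂ n ω / n ≤ β₁ ∨
    (β₁ < S1 P₁ P₂ n ω / n ∧ S1 P₁ P₂ n ω / n < α₁ ∧ S2 P₁ P₂ n ω / (k * n) < α)}

/-- Stopping time of the two-phase test: `n` if phase one is decisive, `(k+1)n` otherwise. -/
noncomputable def twoPhaseTau (P₁ P₂ : 𝒳 → ℝ) (k n : ℕ) (α₁ β₁ : ℝ)
    (ω : Fin ((k + 1) * n) → 𝒳) : ℕ :=
  if β₁ < S1 P₁ P₂ n ω / n ∧ S1 P₁ P₂ n ω / n < α₁ then (k + 1) * n else n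

/-!
Write `Z(λ) = ∑ₐ P₁(a)^{1-λ} P₂(a)^λ`, so that `log P^(λ) = (1-λ) log P₁ + λ log P₂ - log Z(λ)`.
Then `(1-λ) D(P^(λ)‖P₁) + λ D(P^(λ)‖P₂) + D(P₂‖P^(λ)) = (1-λ) D(P₂‖P₁)`, and Gibbs' inequality
gives `D(P^(λ)‖P₁) ≤ D(P₂‖P₁) = D(P^(1)‖P₁)` on `[0,1]`. For `λ < 1` we have `P^(λ) ≠ P₂`, so
`D(P^(λ)‖P₂) > 0` and the constraint defining `E₁(γ)` admits `λ` once `γ` is small; continuity of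
`λ ↦ D(P^(λ)‖P₁)` at `1` then squeezes `E₁(γ)` to `D(P₂‖P₁)`. The substitution `λ ↦ 1 - λ`
exchanges the roles of `P₁` and `P₂`, turning `E₂` into `E₁`.
-/

open InformationTheory

section KL

variable {α : Type*} [Fintype α] {Q P : α → ℝ}

lemma kl_eq_sum_mul_klFun (hP : ∀ x, 0 < P x) (hsum : ∑ x, Q x = ∑ x, P x) :
    kl Q P = ∑ x, P x * klFun (Q x / P x) := by
  have hterm : ∀ x, P x * klFun (Q x / P x) = Q x * log (Q x / P x) + (P x - Q x) := by
    intro x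
    have := (hP x).ne'
    rw [klFun_apply]
    field_simp
    ring
  simp only [hterm, sum_add_distrib, sum_sub_distrib, hsum, sub_self, add_zero]
  rfl

lemma kl_nonneg (hQ : ∀ x, 0 ≤ Q x) (hP : ∀ x, 0 < P x) (hsum : ∑ x, Q x = ∑ x, P x) :
    0 ≤ kl Q P := by
  rw [kl_eq_sum_mul_klFun hP hsum]
  exact sum_nonneg fun x _ =>
    mul_nonneg (hP x).le (klFun_nonneg (div_nonneg (hQ x) (hP x).le))

lemma kl_pos_of_ne (hQ : ∀ x, 0 ≤ Q x) (hP : ∀ x, 0 < P x) (hsum : ∑ x, Q x = ∑ x, P x)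
    (hne : Q ≠ P) : 0 < kl Q P := by
  obtain ⟨x, hx⟩ := Function.ne_iff.mp hne
  have hQP : 0 ≤ Q x / P x := div_nonneg (hQ x) (hP x).le
  have hklFun : klFun (Q x / P x) ≠ 0 := by
    rwa [Ne, klFun_eq_zero_iff hQP, div_eq_one_iff_eq (hP x).ne']
  rw [kl_eq_sum_mul_klFun hP hsum]
  refine sum_pos' (fun y _ => mul_nonneg (hP y).le
    (klFun_nonneg (div_nonneg (hQ y) (hP y).le))) ⟨x, mem_univ x, ?_⟩
  exact mul_pos (hP x) ((klFun_nonneg hQP).lt_of_ne' hklFun)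

end KL

section Tilt

variable {α : Type*} [Fintype α] {P₁ P₂ : α → ℝ}

lemma tilt_swap (l : ℝ) : tilt P₂ P₁ (1 - l) = tilt P₁ P₂ l := by
  funext x
  simp only [tilt, sub_sub_cancel, mul_comm (P₂ _ ^ l)]

lemma tilt_one (h2sum : ∑ x, P₂ x = 1) : tilt P₁ P₂ 1 = P₂ := by
  funext x
  simp [tilt, h2sum]

variable (h1 : ∀ x, 0 < P₁ x) (h2 : ∀ x, 0 < P₂ x)
include h1 h2

lemma tilt_denominator_pos [Nonempty α] (l : ℝ) : 0 < ∑ a, P₁ a ^ (1 - l) * P₂ a ^ l :=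
  sum_pos (fun a _ => mul_pos (rpow_pos_of_pos (h1 a) _) (rpow_pos_of_pos (h2 a) _)) univ_nonempty

lemma tilt_pos [Nonempty α] (l : ℝ) (x : α) : 0 < tilt P₁ P₂ l x :=
  div_pos (mul_pos (rpow_pos_of_pos (h1 x) _) (rpow_pos_of_pos (h2 x) _))
    (tilt_denominator_pos h1 h2 l)

lemma sum_tilt [Nonempty α] (l : ℝ) : ∑ x, tilt P₁ P₂ l x = 1 := by
  simp only [tilt, ← sum_div]
  exact div_self (tilt_denominator_pos h1 h2 l).ne'

lemma log_tilt [Nonempty α] (l : ℝ) (x : α) :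
    log (tilt P₁ P₂ l x) = (1 - l) * log (P₁ x) + l * log (P₂ x)
      - log (∑ a, P₁ a ^ (1 - l) * P₂ a ^ l) := by
  have h1l := rpow_pos_of_pos (h1 x) (1 - l)
  have h2l := rpow_pos_of_pos (h2 x) l
  rw [tilt, log_div (mul_pos h1l h2l).ne' (tilt_denominator_pos h1 h2 l).ne',
    log_mul h1l.ne' h2l.ne', log_rpow (h1 x), log_rpow (h2 x)]

lemma continuous_tilt [Nonempty α] (x : α) : Continuous fun l => tilt P₁ P₂ l x := by
  have hnum : ∀ a, Continuous fun l : ℝ => P₁ a ^ (1 - l) * P₂ a ^ l := fun a =>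
    ((continuous_const_rpow (h1 a).ne').comp (by fun_prop)).mul
      (continuous_const_rpow (h2 a).ne')
  exact (hnum x).div (continuous_finsetSum _ fun a _ => hnum a)
    fun l => (tilt_denominator_pos h1 h2 l).ne'

lemma continuous_kl_tilt [Nonempty α] {P : α → ℝ} (hP : ∀ x, 0 < P x) :
    Continuous fun l => kl (tilt P₁ P₂ l) P :=
  continuous_finsetSum _ fun x _ => (continuous_tilt h1 h2 x).mul
    (((continuous_tilt h1 h2 x).div_const _).log fun l => (div_pos (tilt_pos h1 h2 l x) (hP x)).ne')

lemma kl_tilt_identity [Nonempty α] (h2sum : ∑ x, P₂ x = 1) (l : ℝ) :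
    (1 - l) * kl (tilt P₁ P₂ l) P₁ + l * kl (tilt P₁ P₂ l) P₂ + kl P₂ (tilt P₁ P₂ l)
      = (1 - l) * kl P₂ P₁ := by
  set Q := tilt P₁ P₂ l
  set c := log (∑ a, P₁ a ^ (1 - l) * P₂ a ^ l)
  have hQ : ∀ x, 0 < Q x := tilt_pos h1 h2 l
  calc (1 - l) * kl Q P₁ + l * kl Q P₂ + kl P₂ Q
      = ∑ x, ((1 - l) * (P₂ x * log (P₂ x / P₁ x)) + (P₂ x - Q x) * c) := by
        simp only [kl, mul_sum, ← sum_add_distrib]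
        refine sum_congr rfl fun x _ => ?_
        rw [log_div (hQ x).ne' (h1 x).ne', log_div (hQ x).ne' (h2 x).ne',
          log_div (h2 x).ne' (hQ x).ne', log_div (h2 x).ne' (h1 x).ne', log_tilt h1 h2 l x]
        ring
    _ = (1 - l) * kl P₂ P₁ + (∑ x, P₂ x - ∑ x, Q x) * c := by
        rw [sum_add_distrib, ← sum_mul, ← sum_sub_distrib, kl, mul_sum]
    _ = (1 - l) * kl P₂ P₁ := by
        rw [h2sum, sum_tilt h1 h2, sub_self, zero_mul, add_zero]

lemma kl_tilt_le [Nonempty α] (h2sum : ∑ x, P₂ x = 1) {l : ℝ} (hl : l ∈ Set.Icc (0 : ℝ) 1) :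
    kl (tilt P₁ P₂ l) P₁ ≤ kl P₂ P₁ := by
  rcases hl.2.lt_or_eq with hl1 | rfl
  · have hsum : ∑ x, tilt P₁ P₂ l x = ∑ x, P₂ x := by rw [sum_tilt h1 h2, h2sum]
    have hQP₂ := kl_nonneg (fun x => (tilt_pos h1 h2 l x).le) h2 hsum
    have hP₂Q := kl_nonneg (fun x => (h2 x).le) (tilt_pos h1 h2 l) hsum.symm
    have hid := kl_tilt_identity h1 h2 h2sum l
    have := mul_nonneg hl.1 hQP₂
    exact le_of_mul_le_mul_left (by linarith) (sub_pos.2 hl1)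
  · rw [tilt_one h2sum]

lemma tilt_ne_of_lt_one [Nonempty α] (h1sum : ∑ x, P₁ x = 1) (h2sum : ∑ x, P₂ x = 1)
    (hne : P₁ ≠ P₂) {l : ℝ} (hl : l < 1) : tilt P₁ P₂ l ≠ P₂ := by
  intro heq
  set k := exp (-log (∑ a, P₁ a ^ (1 - l) * P₂ a ^ l) / (1 - l))
  -- `P^(λ) = P₂` forces `(1-λ) log (P₂/P₁)` to be the constant `-log Z(λ)`.
  have hprop : ∀ x, P₂ x = k * P₁ x := by
    intro x
    have hlog := log_tilt h1 h2 l x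
    rw [heq] at hlog
    rw [← exp_log (h2 x), ← exp_log (h1 x), ← exp_add]
    congr 1
    field_simp [(sub_pos.2 hl).ne']
    linarith
  have hk : k = 1 := by
    have htotal := congrArg (fun P : α → ℝ => ∑ x, P x) (funext hprop)
    simpa [← mul_sum, h1sum, h2sum] using htotal.symm
  exact hne (funext fun x => by rw [hprop x, hk, one_mul])

end Tilt

lemma tendsto_sSup_of_continuousWithinAt_one {f g : ℝ → ℝ}
    (hf : ContinuousWithinAt f (Set.Iio 1) 1) (hle : ∀ l ∈ Set.Icc (0 : ℝ) 1, f l ≤ f 1)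
    (hg : ∀ l ∈ Set.Ico (0 : ℝ) 1, 0 < g l) :
    Tendsto (fun γ => sSup {E | ∃ l ∈ Set.Icc (0 : ℝ) 1, γ ≤ g l ∧ E = f l})
      (nhdsWithin 0 (Set.Ioi 0)) (nhds (f 1)) := by
  have hbdd : ∀ γ, BddAbove {E | ∃ l ∈ Set.Icc (0 : ℝ) 1, γ ≤ g l ∧ E = f l} :=
    fun γ => ⟨f 1, by rintro _ ⟨l, hl, -, rfl⟩; exact hle l hl⟩
  refine tendsto_order.2 ⟨fun a ha => ?_, fun b hb => ?_⟩
  · obtain ⟨l, hfl, hl⟩ := ((hf.eventually (lt_mem_nhds ha)).and (Ico_mem_nhdsLT one_pos)).exists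
    filter_upwards [Ioo_mem_nhdsGT (hg l hl)] with γ hγ
    exact hfl.trans_le (le_csSup (hbdd γ) ⟨l, Set.Ico_subset_Icc_self hl, hγ.2.le, rfl⟩)
  · filter_upwards [Ioo_mem_nhdsGT (hg 0 ⟨le_rfl, one_pos⟩)] with γ hγ
    refine lt_of_le_of_lt (csSup_le ⟨f 0, 0, ⟨le_rfl, zero_le_one⟩, hγ.2.le, rfl⟩ ?_) hb
    rintro _ ⟨l, hl, -, rfl⟩
    exact hle l hl

lemma E2exp_eq_E1exp_swap {α : Type*} [Fintype α] (P₁ P₂ : α → ℝ) (γ : ℝ) :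
    E2exp P₁ P₂ γ = E1exp P₂ P₁ γ := by
  have hrefl : ∀ {l : ℝ}, l ∈ Set.Icc (0 : ℝ) 1 → 1 - l ∈ Set.Icc (0 : ℝ) 1 :=
    fun hl => ⟨sub_nonneg.2 hl.2, sub_le_self _ hl.1⟩
  unfold E1exp E2exp
  congr 1
  ext E
  constructor <;>
  · rintro ⟨l, hl, hγ, rfl⟩
    exact ⟨1 - l, hrefl hl, by rwa [tilt_swap], by rw [tilt_swap]⟩

lemma tendsto_E1exp {α : Type*} [Fintype α] [Nonempty α] {P₁ P₂ : α → ℝ}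
    (h1 : ∀ x, 0 < P₁ x) (h2 : ∀ x, 0 < P₂ x)
    (h1sum : ∑ x, P₁ x = 1) (h2sum : ∑ x, P₂ x = 1) (hne : P₁ ≠ P₂) :
    Tendsto (E1exp P₁ P₂) (nhdsWithin 0 (Set.Ioi 0)) (nhds (kl P₂ P₁)) := by
  have hsum : ∀ l, ∑ x, tilt P₁ P₂ l x = ∑ x, P₂ x := fun l => by rw [sum_tilt h1 h2, h2sum]
  have h := tendsto_sSup_of_continuousWithinAt_one
    (f := fun l => kl (tilt P₁ P₂ l) P₁) (g := fun l => kl (tilt P₁ P₂ l) P₂)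
    (continuous_kl_tilt h1 h2 h1).continuousWithinAt
    (fun l hl => by simpa only [tilt_one h2sum] using kl_tilt_le h1 h2 h2sum hl)
    (fun l hl => kl_pos_of_ne (fun x => (tilt_pos h1 h2 l x).le) h2 (hsum l)
      (tilt_ne_of_lt_one h1 h2 h1sum h2sum hne hl.2))
  rwa [tilt_one h2sum] at h

/-- As `γ → 0⁺`, `E₁(γ) → D(P₂‖P₁)` and `E₂(γ) → D(P₁‖P₂)`: the almost-fixed-length
exponents approach the optimal sequential error exponents. -/
theorem Eexp_tendsto_sequential (P₁ P₂ : 𝒳 → ℝ)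
    (h1pos : ∀ x, 0 < P₁ x) (h2pos : ∀ x, 0 < P₂ x)
    (h1sum : ∑ x, P₁ x = 1) (h2sum : ∑ x, P₂ x = 1)
    (hne : P₁ ≠ P₂) :
    Filter.Tendsto (fun γ => E1exp P₁ P₂ γ) (nhdsWithin 0 (Set.Ioi 0))
      (nhds (kl P₂ P₁)) ∧
    Filter.Tendsto (fun γ => E2exp P₁ P₂ γ) (nhdsWithin 0 (Set.Ioi 0))
      (nhds (kl P₁ P₂)) := by
  refine ⟨tendsto_E1exp h1pos h2pos h1sum h2sum hne, ?_⟩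
  simp only [E2exp_eq_E1exp_swap]
  exact tendsto_E1exp h2pos h1pos h2sum h1sum hne.symm
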